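/- The deontic regularity rule (JRE_O) — from φ ↔ ψ infer O[t]_i φ ↔ O[t]_i ψ — is not validity preserving in JTO_CS over interpreted-neighborhood systems: for every constant specification CS there exist formulas φ, ψ, a deontic term t ∈ Tm^O and an agent i such that ⊨^N_CS φ ↔ ψ but not ⊨^N_CS O[t]_i φ ↔ O[t]_i ψ. In particular, for a justification variable x and an atomic proposition p, ⊨^N_CS p ↔ p∧p but not ⊨^N_CS O[x]_i p ↔ O[x]_i (p∧p). -/

import Mathlib

namespace JTO

/-- Epistemic justification terms. -/
inductive TmE (Const Var : Type) : Type
  | const : Const → TmE Const Var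
  | var   : Var → TmE Const Var
  | bang  : TmE Const Var → TmE Const Var
  | plus  : TmE Const Var → TmE Const Var → TmE Const Var
  | times : TmE Const Var → TmE Const Var → TmE Const Var

/-- Deontic (normative) justification terms. -/
inductive TmO (Const Var : Type) : Type
  | const : Const → TmO Const Var
  | var   : Var → TmO Const Var
  | ddag  : TmO Const Var → TmO Const Var
  | times : TmO Const Var → TmO Const Var → TmO Const Var

/-- Formulas of the logic JTO. -/
inductive Fm (Ag Const Var Atom : Type) : Type
  | atom  : Atom → Fm Ag Const Var Atom
  | bot   : Fm Ag Const Var Atom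
  | imp   : Fm Ag Const Var Atom → Fm Ag Const Var Atom → Fm Ag Const Var Atom
  | next  : Fm Ag Const Var Atom → Fm Ag Const Var Atom
  | wprev : Fm Ag Const Var Atom → Fm Ag Const Var Atom
  | untl  : Fm Ag Const Var Atom → Fm Ag Const Var Atom → Fm Ag Const Var Atom
  | snce  : Fm Ag Const Var Atom → Fm Ag Const Var Atom → Fm Ag Const Var Atom
  | jbox  : Ag → TmE Const Var → Fm Ag Const Var Atom → Fm Ag Const Var Atom
  | obox  : Ag → TmO Const Var → Fm Ag Const Var Atom → Fm Ag Const Var Atom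

namespace Fm

variable {Ag Const Var Atom : Type}

/-- ¬φ := φ → ⊥ -/
def neg (φ : Fm Ag Const Var Atom) : Fm Ag Const Var Atom := φ.imp bot
/-- ⊤ := ¬⊥ -/
def top : Fm Ag Const Var Atom := neg bot
/-- φ ∨ ψ := ¬φ → ψ -/
def disj (φ ψ : Fm Ag Const Var Atom) : Fm Ag Const Var Atom := (neg φ).imp ψ
/-- φ ∧ ψ := ¬(¬φ ∨ ¬ψ) -/
def conj (φ ψ : Fm Ag Const Var Atom) : Fm Ag Const Var Atom := neg (disj (neg φ) (neg ψ))
/-- φ ↔ ψ := (φ→ψ) ∧ (ψ→φ) -/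
def biim (φ ψ : Fm Ag Const Var Atom) : Fm Ag Const Var Atom := conj (φ.imp ψ) (ψ.imp φ)
/-- strong previous ⊙ₛφ := ¬⊙_w¬φ -/
def sprev (φ : Fm Ag Const Var Atom) : Fm Ag Const Var Atom := neg (wprev (neg φ))
/-- eventually ◇φ := ⊤ U φ -/
def ev (φ : Fm Ag Const Var Atom) : Fm Ag Const Var Atom := untl top φ
/-- always (henceforth) □φ := ¬◇¬φ -/
def alw (φ : Fm Ag Const Var Atom) : Fm Ag Const Var Atom := neg (ev (neg φ))
/-- once ◇⁻φ := ⊤ S φ -/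
def once (φ : Fm Ag Const Var Atom) : Fm Ag Const Var Atom := snce top φ
/-- has-always-been □⁻φ := ¬◇⁻¬φ -/
def sofar (φ : Fm Ag Const Var Atom) : Fm Ag Const Var Atom := neg (once (neg φ))
/-- ⊡φ := □⁻φ ∧ □φ -/
def boxdot (φ : Fm Ag Const Var Atom) : Fm Ag Const Var Atom := conj (sofar φ) (alw φ)
/-- weak until (unless) φ W ψ := (φ U ψ) ∨ □φ -/
def wuntl (φ ψ : Fm Ag Const Var Atom) : Fm Ag Const Var Atom := disj (untl φ ψ) (alw φ)
/-- permission P[s]ᵢφ := ¬O[s]ᵢ¬φ -/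
def pbox (i : Ag) (t : TmO Const Var) (φ : Fm Ag Const Var Atom) : Fm Ag Const Var Atom :=
  neg (obox i t (neg φ))
/-- time = m, i.e. ⊙ₛ^m ⊙_w ⊥ -/
def timeEq : ℕ → Fm Ag Const Var Atom
  | 0 => wprev bot
  | m + 1 => sprev (timeEq m)
/-- true_m(φ) := ⊡(time=m → φ) -/
def trueAt (m : ℕ) (φ : Fm Ag Const Var Atom) : Fm Ag Const Var Atom :=
  boxdot ((timeEq m).imp φ)

/-- Subformulas. -/
def subf : Fm Ag Const Var Atom → Set (Fm Ag Const Var Atom)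
  | atom p => {atom p}
  | bot => {bot}
  | imp φ ψ => insert (imp φ ψ) (subf φ ∪ subf ψ)
  | next φ => insert (next φ) (subf φ)
  | wprev φ => insert (wprev φ) (subf φ)
  | untl φ ψ => insert (untl φ ψ) (subf φ ∪ subf ψ)
  | snce φ ψ => insert (snce φ ψ) (subf φ ∪ subf ψ)
  | jbox i t φ => insert (jbox i t φ) (subf φ)
  | obox i t φ => insert (obox i t φ) (subf φ)

/-- Subf⁺(χ) := A_χ ∪ {¬ψ : ψ ∈ A_χ}, with A_χ = Subf(χ) ∪ Subf(⊤ S ⊙_w⊥). -/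
def subfPlus (χ : Fm Ag Const Var Atom) : Set (Fm Ag Const Var Atom) :=
  (subf χ ∪ subf (snce top (wprev bot))) ∪ neg '' (subf χ ∪ subf (snce top (wprev bot)))

end Fm

variable {Ag Const Var Atom : Type}

/-- Propositional tautologies in the language of JTO. -/
def Taut (φ : Fm Ag Const Var Atom) : Prop :=
  ∀ v : Fm Ag Const Var Atom → Bool,
    v Fm.bot = false → (∀ a b, v (a.imp b) = (!(v a) || v b)) → v φ = true

/-- The axioms of JTO. -/
inductive IsAxiom : Fm Ag Const Var Atom → Prop
  | taut {φ : Fm Ag Const Var Atom} : Taut φ → IsAxiom φ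
  | nextK (φ ψ : Fm Ag Const Var Atom) :
      IsAxiom ((Fm.next (φ.imp ψ)).imp ((Fm.next φ).imp (Fm.next ψ)))
  | alwK (φ ψ : Fm Ag Const Var Atom) :
      IsAxiom ((Fm.alw (φ.imp ψ)).imp ((Fm.alw φ).imp (Fm.alw ψ)))
  | fn (φ : Fm Ag Const Var Atom) :
      IsAxiom (Fm.biim (Fm.next (Fm.neg φ)) (Fm.neg (Fm.next φ)))
  | ind (φ : Fm Ag Const Var Atom) :
      IsAxiom ((Fm.alw (φ.imp (Fm.next φ))).imp (φ.imp (Fm.alw φ)))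
  | untl1 (φ ψ : Fm Ag Const Var Atom) :
      IsAxiom ((Fm.untl φ ψ).imp (Fm.ev ψ))
  | untl2 (φ ψ : Fm Ag Const Var Atom) :
      IsAxiom (Fm.biim (Fm.untl φ ψ) (Fm.disj ψ (Fm.conj φ (Fm.next (Fm.untl φ ψ)))))
  | sofarK (φ ψ : Fm Ag Const Var Atom) :
      IsAxiom ((Fm.sofar (φ.imp ψ)).imp ((Fm.sofar φ).imp (Fm.sofar ψ)))
  | wprevK (φ ψ : Fm Ag Const Var Atom) :
      IsAxiom ((Fm.wprev (φ.imp ψ)).imp ((Fm.wprev φ).imp (Fm.wprev ψ)))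
  | sw (φ : Fm Ag Const Var Atom) : IsAxiom ((Fm.sprev φ).imp (Fm.wprev φ))
  | initial : IsAxiom (Fm.once (Fm.wprev (Fm.bot : Fm Ag Const Var Atom)))
  | sofarInd (φ : Fm Ag Const Var Atom) :
      IsAxiom ((Fm.sofar (φ.imp (Fm.wprev φ))).imp (φ.imp (Fm.sofar φ)))
  | snce1 (φ ψ : Fm Ag Const Var Atom) : IsAxiom ((Fm.snce φ ψ).imp (Fm.once ψ))
  | snce2 (φ ψ : Fm Ag Const Var Atom) :
      IsAxiom (Fm.biim (Fm.snce φ ψ) (Fm.disj ψ (Fm.conj φ (Fm.sprev (Fm.snce φ ψ)))))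
  | fp (φ : Fm Ag Const Var Atom) : IsAxiom (φ.imp (Fm.next (Fm.sprev φ)))
  | pf (φ : Fm Ag Const Var Atom) : IsAxiom (φ.imp (Fm.wprev (Fm.next φ)))
  | app (i : Ag) (t s : TmE Const Var) (φ ψ : Fm Ag Const Var Atom) :
      IsAxiom ((Fm.jbox i t (φ.imp ψ)).imp ((Fm.jbox i s φ).imp (Fm.jbox i (TmE.times t s) ψ)))
  | sum1 (i : Ag) (t s : TmE Const Var) (φ : Fm Ag Const Var Atom) :
      IsAxiom ((Fm.jbox i t φ).imp (Fm.jbox i (TmE.plus t s) φ))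
  | sum2 (i : Ag) (t s : TmE Const Var) (φ : Fm Ag Const Var Atom) :
      IsAxiom ((Fm.jbox i s φ).imp (Fm.jbox i (TmE.plus t s) φ))
  | fact (i : Ag) (t : TmE Const Var) (φ : Fm Ag Const Var Atom) :
      IsAxiom ((Fm.jbox i t φ).imp φ)
  | pos (i : Ag) (t : TmE Const Var) (φ : Fm Ag Const Var Atom) :
      IsAxiom ((Fm.jbox i t φ).imp (Fm.jbox i (TmE.bang t) (Fm.jbox i t φ)))
  | appO (i : Ag) (t s : TmO Const Var) (φ ψ : Fm Ag Const Var Atom) :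
      IsAxiom ((Fm.obox i t (φ.imp ψ)).imp ((Fm.obox i s φ).imp (Fm.obox i (TmO.times t s) ψ)))
  | noc (i : Ag) (t : TmO Const Var) (φ : Fm Ag Const Var Atom) :
      IsAxiom ((Fm.obox i t φ).imp (Fm.pbox i t φ))
  | ofact (i : Ag) (t : TmO Const Var) (φ : Fm Ag Const Var Atom) :
      IsAxiom (Fm.obox i (TmO.ddag t) ((Fm.obox i t φ).imp φ))

/-- Formulas of the shape [c_{j_n}]_{i_n} … [c_{j_1}]_{i_1} φ with φ an axiom instance, n ≥ 1. -/
inductive EIter : Fm Ag Const Var Atom → Prop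
  | base {i : Ag} {c : Const} {φ : Fm Ag Const Var Atom} :
      IsAxiom φ → EIter (Fm.jbox i (TmE.const c) φ)
  | step {i : Ag} {c : Const} {φ : Fm Ag Const Var Atom} :
      EIter φ → EIter (Fm.jbox i (TmE.const c) φ)

/-- Formulas of the shape O[c_{j_n}]_{i_n} … O[c_{j_1}]_{i_1} φ with φ an axiom instance, n ≥ 1. -/
inductive OIter : Fm Ag Const Var Atom → Prop
  | base {i : Ag} {c : Const} {φ : Fm Ag Const Var Atom} :
      IsAxiom φ → OIter (Fm.obox i (TmO.const c) φ)
  | step {i : Ag} {c : Const} {φ : Fm Ag Const Var Atom} :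
      OIter φ → OIter (Fm.obox i (TmO.const c) φ)

/-- A constant specification: a downward closed set of iterated constant-justification
assertions of axiom instances. -/
structure ConstSpec (Ag Const Var Atom : Type) where
  set : Set (Fm Ag Const Var Atom)
  shape : ∀ φ ∈ set, EIter φ ∨ OIter φ
  dcE : ∀ (i : Ag) (c : Const) (φ : Fm Ag Const Var Atom),
    Fm.jbox i (TmE.const c) φ ∈ set → EIter φ → φ ∈ set
  dcO : ∀ (i : Ag) (c : Const) (φ : Fm Ag Const Var Atom),
    Fm.obox i (TmO.const c) φ ∈ set → OIter φ → φ ∈ set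

/-- CS^E : the epistemic part of a constant specification. -/
def ConstSpec.csE (CS : ConstSpec Ag Const Var Atom) : Set (Fm Ag Const Var Atom) :=
  {φ ∈ CS.set | EIter φ}

/-- CS^O : the deontic part of a constant specification. -/
def ConstSpec.csO (CS : ConstSpec Ag Const Var Atom) : Set (Fm Ag Const Var Atom) :=
  {φ ∈ CS.set | OIter φ}

/-- Derivability in the Hilbert system JTO_CS. -/
inductive Deriv (CS : ConstSpec Ag Const Var Atom) : Fm Ag Const Var Atom → Prop
  | ax {φ : Fm Ag Const Var Atom} : IsAxiom φ → Deriv CS φ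
  | mp {φ ψ : Fm Ag Const Var Atom} : Deriv CS (φ.imp ψ) → Deriv CS φ → Deriv CS ψ
  | necNext {φ : Fm Ag Const Var Atom} : Deriv CS φ → Deriv CS (Fm.next φ)
  | necWPrev {φ : Fm Ag Const Var Atom} : Deriv CS φ → Deriv CS (Fm.wprev φ)
  | necAlw {φ : Fm Ag Const Var Atom} : Deriv CS φ → Deriv CS (Fm.alw φ)
  | necSofar {φ : Fm Ag Const Var Atom} : Deriv CS φ → Deriv CS (Fm.sofar φ)
  | csax {φ : Fm Ag Const Var Atom} : φ ∈ CS.set → Deriv CS φ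

/-- Conjunction of a list of formulas. -/
def conjList : List (Fm Ag Const Var Atom) → Fm Ag Const Var Atom
  | [] => Fm.top
  | φ :: l => Fm.conj φ (conjList l)

/-- T ⊢_CS φ iff ⊢_CS (ψ₁ ∧ … ∧ ψ_n) → φ for some ψ₁, …, ψ_n ∈ T. -/
def DerivFrom (CS : ConstSpec Ag Const Var Atom) (T : Set (Fm Ag Const Var Atom))
    (φ : Fm Ag Const Var Atom) : Prop :=
  ∃ L : List (Fm Ag Const Var Atom), (∀ ψ ∈ L, ψ ∈ T) ∧ Deriv CS ((conjList L).imp φ)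

/-- A set of formulas is consistent if it does not derive ⊥. -/
def Consistent (CS : ConstSpec Ag Const Var Atom) (T : Set (Fm Ag Const Var Atom)) : Prop :=
  ¬ DerivFrom CS T Fm.bot

end JTO
namespace JTO

variable {Ag Const Var Atom : Type}

/-- The data of an F-interpreted system (Fitting-style), without conditions. -/
structure FQuasi (Ag Const Var Atom S : Type) where
  R : Set (ℕ → S)
  K : Ag → S → S → Prop
  KO : Ag → S → S → Prop
  E : Ag → S → TmE Const Var → Set (Fm Ag Const Var Atom)
  EO : Ag → S → TmO Const Var → Set (Fm Ag Const Var Atom)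
  val : S → Set Atom

/-- Truth at a point (r, n) of an F-interpreted system. -/
def FQuasi.Sat {S : Type} (I : FQuasi Ag Const Var Atom S) :
    Fm Ag Const Var Atom → (ℕ → S) → ℕ → Prop
  | .atom p, r, n => p ∈ I.val (r n)
  | .bot, _, _ => False
  | .imp φ ψ, r, n => I.Sat φ r n → I.Sat ψ r n
  | .next φ, r, n => I.Sat φ r (n + 1)
  | .wprev φ, r, n => n = 0 ∨ I.Sat φ r (n - 1)
  | .untl φ ψ, r, n => ∃ m, n ≤ m ∧ I.Sat ψ r m ∧ ∀ k, n ≤ k → k < m → I.Sat φ r k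
  | .snce φ ψ, r, n => ∃ m, m ≤ n ∧ I.Sat ψ r m ∧ ∀ k, m < k → k ≤ n → I.Sat φ r k
  | .jbox i t φ, r, n =>
      φ ∈ I.E i (r n) t ∧ ∀ r' ∈ I.R, ∀ n' : ℕ, I.K i (r n) (r' n') → I.Sat φ r' n'
  | .obox i t φ, r, n =>
      φ ∈ I.EO i (r n) t ∧ ∀ r' ∈ I.R, ∀ n' : ℕ, I.KO i (r n) (r' n') → I.Sat φ r' n'

/-- An F-interpreted system for JTO_CS. -/
structure FIS (Ag Const Var Atom S : Type) (CS : ConstSpec Ag Const Var Atom)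
    extends FQuasi Ag Const Var Atom S where
  Sne : Nonempty S
  Rne : R.Nonempty
  Krefl : ∀ (i : Ag) (w : S), K i w w
  Ktrans : ∀ (i : Ag) (u v w : S), K i u v → K i v w → K i u w
  KOshift : ∀ (i : Ag) (w v : S), KO i w v → KO i v v
  Emono : ∀ (i : Ag) (v w : S) (t : TmE Const Var), K i v w → E i v t ⊆ E i w t
  Ecs : ∀ (i : Ag) (w : S) (t : TmE Const Var) (φ : Fm Ag Const Var Atom),
    Fm.jbox i t φ ∈ CS.csE → φ ∈ E i w t
  Eapp : ∀ (i : Ag) (w : S) (t s : TmE Const Var) (φ ψ : Fm Ag Const Var Atom),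
    φ.imp ψ ∈ E i w t → φ ∈ E i w s → ψ ∈ E i w (TmE.times t s)
  Epos : ∀ (i : Ag) (w : S) (t : TmE Const Var) (φ : Fm Ag Const Var Atom),
    φ ∈ E i w t → Fm.jbox i t φ ∈ E i w (TmE.bang t)
  EOcs : ∀ (i : Ag) (w : S) (t : TmO Const Var) (φ : Fm Ag Const Var Atom),
    Fm.obox i t φ ∈ CS.csO → φ ∈ EO i w t
  EOapp : ∀ (i : Ag) (w : S) (t s : TmO Const Var) (φ ψ : Fm Ag Const Var Atom),
    φ.imp ψ ∈ EO i w t → φ ∈ EO i w s → ψ ∈ EO i w (TmO.times t s)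
  EOcons : ∀ (i : Ag) (w : S) (t : TmO Const Var) (φ : Fm Ag Const Var Atom),
    φ ∈ EO i w t → Fm.neg φ ∉ EO i w t
  EOfact : ∀ (i : Ag) (w : S) (t : TmO Const Var) (φ : Fm Ag Const Var Atom),
    (Fm.obox i t φ).imp φ ∈ EO i w (TmO.ddag t)

/-- Truth at a point of an F-interpreted system. -/
abbrev FIS.Sat {S : Type} {CS : ConstSpec Ag Const Var Atom}
    (I : FIS Ag Const Var Atom S CS) :
    Fm Ag Const Var Atom → (ℕ → S) → ℕ → Prop :=
  I.toFQuasi.Sat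

/-- I ⊨ φ : truth at every point of the system. -/
def FIS.Valid {S : Type} {CS : ConstSpec Ag Const Var Atom}
    (I : FIS Ag Const Var Atom S CS) (φ : Fm Ag Const Var Atom) : Prop :=
  ∀ r ∈ I.R, ∀ n : ℕ, I.Sat φ r n

/-- ⊨_CS φ : validity in all F-interpreted systems for JTO_CS. -/
def FValid (CS : ConstSpec Ag Const Var Atom) (φ : Fm Ag Const Var Atom) : Prop :=
  ∀ (S : Type) (I : FIS Ag Const Var Atom S CS), I.Valid φ

/-- T ⊨_CS φ : the local consequence relation over F-interpreted systems. -/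
def FConseq (CS : ConstSpec Ag Const Var Atom) (T : Set (Fm Ag Const Var Atom))
    (φ : Fm Ag Const Var Atom) : Prop :=
  ∀ (S : Type) (I : FIS Ag Const Var Atom S CS), ∀ r ∈ I.R, ∀ n : ℕ,
    (∀ ψ ∈ T, I.Sat ψ r n) → I.Sat φ r n

/-- Maximal consistent sets of formulas. -/
def MCS (CS : ConstSpec Ag Const Var Atom) : Set (Set (Fm Ag Const Var Atom)) :=
  {Γ | Consistent CS Γ ∧ ∀ Δ, Γ ⊂ Δ → ¬ Consistent CS Δ}

/-- χ-maximal consistent subsets of Subf⁺(χ). -/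
def MCSx (CS : ConstSpec Ag Const Var Atom) (χ : Fm Ag Const Var Atom) :
    Set (Set (Fm Ag Const Var Atom)) :=
  {X | X ⊆ Fm.subfPlus χ ∧ Consistent CS X ∧
    ∀ Y, Y ⊆ Fm.subfPlus χ → X ⊂ Y → ¬ Consistent CS Y}

/-- The relation R_○ on MCS_χ (given by witnessing maximal consistent sets). -/
def Rnext (CS : ConstSpec Ag Const Var Atom) (χ : Fm Ag Const Var Atom)
    (X Y : Set (Fm Ag Const Var Atom)) : Prop :=
  ∃ Γ ∈ MCS CS, ∃ Δ ∈ MCS CS, X = Γ ∩ Fm.subfPlus χ ∧ Y = Δ ∩ Fm.subfPlus χ ∧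
    {φ | Fm.next φ ∈ Γ} ⊆ Δ

/-- Acceptable sequences of elements of MCS_χ. -/
def Acceptable (CS : ConstSpec Ag Const Var Atom) (χ : Fm Ag Const Var Atom)
    (X : ℕ → Set (Fm Ag Const Var Atom)) : Prop :=
  (∀ n, X n ∈ MCSx CS χ) ∧
  (∀ n, Rnext CS χ (X n) (X (n + 1))) ∧
  (∀ n (φ ψ : Fm Ag Const Var Atom), Fm.untl φ ψ ∈ X n →
    ∃ m, n ≤ m ∧ ψ ∈ X m ∧ ∀ k, n ≤ k → k < m → φ ∈ X k) ∧
  Fm.wprev Fm.bot ∈ X 0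

/-- The canonical epistemic accessibility relation. -/
def canK (CS : ConstSpec Ag Const Var Atom) (χ : Fm Ag Const Var Atom) (i : Ag)
    (X Y : Set (Fm Ag Const Var Atom)) : Prop :=
  ∀ Δ ∈ MCS CS, Y = Δ ∩ Fm.subfPlus χ →
    ∃ Γ ∈ MCS CS, X = Γ ∩ Fm.subfPlus χ ∧
      {φ | ∃ t : TmE Const Var, Fm.jbox i t φ ∈ Γ} ⊆ Δ

/-- The canonical evidence function. -/
def canE (CS : ConstSpec Ag Const Var Atom) (χ : Fm Ag Const Var Atom) (i : Ag)
    (X : Set (Fm Ag Const Var Atom)) (t : TmE Const Var) : Set (Fm Ag Const Var Atom) :=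
  {φ | ∀ Γ ∈ MCS CS, X = Γ ∩ Fm.subfPlus χ → Fm.jbox i t φ ∈ Γ}

/-- The canonical deontic accessibility relation. -/
def canKO (CS : ConstSpec Ag Const Var Atom) (χ : Fm Ag Const Var Atom) (i : Ag)
    (X Y : Set (Fm Ag Const Var Atom)) : Prop :=
  ∃ Γ ∈ MCS CS, ∃ Δ ∈ MCS CS, X = Γ ∩ Fm.subfPlus χ ∧ Y = Δ ∩ Fm.subfPlus χ ∧
    {φ | ∃ t : TmO Const Var, Fm.obox i t φ ∈ Γ} ⊆ Δ

/-- The canonical normative evidence function. -/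
def canEO (CS : ConstSpec Ag Const Var Atom) (χ : Fm Ag Const Var Atom) (i : Ag)
    (X : Set (Fm Ag Const Var Atom)) (t : TmO Const Var) : Set (Fm Ag Const Var Atom) :=
  {φ | ∀ Γ ∈ MCS CS, X = Γ ∩ Fm.subfPlus χ → Fm.obox i t φ ∈ Γ}

/-- The χ-canonical F-interpreted system (as structured data). -/
def canFQuasi (CS : ConstSpec Ag Const Var Atom) (χ : Fm Ag Const Var Atom) :
    FQuasi Ag Const Var Atom ↥(MCSx CS χ) where
  R := {r | Acceptable CS χ (fun n => ((r n : Set (Fm Ag Const Var Atom))))}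
  K := fun i X Y => canK CS χ i X.1 Y.1
  KO := fun i X Y => canKO CS χ i X.1 Y.1
  E := fun i X t => canE CS χ i X.1 t
  EO := fun i X t => canEO CS χ i X.1 t
  val := fun X => {p | Fm.atom p ∈ X.1}

end JTO
namespace JTO

variable {Ag Const Var Atom : Type}

/-- The data of a quasi-interpreted-neighborhood system. -/
structure NQuasi (Ag Const Var Atom S : Type) where
  R : Set (ℕ → S)
  N : Ag → S → TmE Const Var → Set (Set S)
  NO : Ag → S → TmO Const Var → Set (Set S)
  val : S → Set Atom
  valF : S → Set (Fm Ag Const Var Atom)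

/-- The image Im(R) of the system of runs. -/
def NQuasi.Im {S : Type} (I : NQuasi Ag Const Var Atom S) : Set S :=
  {w | ∃ r ∈ I.R, ∃ n : ℕ, r n = w}

/-- Truth at a point (r, n) of a quasi-interpreted-neighborhood system. -/
def NQuasi.SatP {S : Type} (I : NQuasi Ag Const Var Atom S) :
    Fm Ag Const Var Atom → (ℕ → S) → ℕ → Prop
  | .atom p, r, n => p ∈ I.val (r n)
  | .bot, _, _ => False
  | .imp φ ψ, r, n => I.SatP φ r n → I.SatP ψ r n
  | .next φ, r, n => I.SatP φ r (n + 1)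
  | .wprev φ, r, n => n = 0 ∨ I.SatP φ r (n - 1)
  | .untl φ ψ, r, n => ∃ m, n ≤ m ∧ I.SatP ψ r m ∧ ∀ k, n ≤ k → k < m → I.SatP φ r k
  | .snce φ ψ, r, n => ∃ m, m ≤ n ∧ I.SatP ψ r m ∧ ∀ k, m < k → k ≤ n → I.SatP φ r k
  | .jbox i t φ, r, n =>
      {w | (∃ r' ∈ I.R, ∃ n' : ℕ, r' n' = w ∧ I.SatP φ r' n') ∨
            (w ∉ I.Im ∧ φ ∈ I.valF w)} ∈ I.N i (r n) t
  | .obox i t φ, r, n =>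
      {w | (∃ r' ∈ I.R, ∃ n' : ℕ, r' n' = w ∧ I.SatP φ r' n') ∨
            (w ∉ I.Im ∧ φ ∈ I.valF w)} ∈ I.NO i (r n) t

/-- Truth at a state of a quasi-interpreted-neighborhood system. -/
def NQuasi.SatS {S : Type} (I : NQuasi Ag Const Var Atom S)
    (φ : Fm Ag Const Var Atom) (w : S) : Prop :=
  (∃ r ∈ I.R, ∃ n : ℕ, r n = w ∧ I.SatP φ r n) ∨ (w ∉ I.Im ∧ φ ∈ I.valF w)

/-- The truth set ⟦φ⟧ of a formula. -/
def NQuasi.tset {S : Type} (I : NQuasi Ag Const Var Atom S)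
    (φ : Fm Ag Const Var Atom) : Set S :=
  {w | I.SatS φ w}

/-- An interpreted-neighborhood system for JTO_CS. -/
structure NIS (Ag Const Var Atom S : Type) (CS : ConstSpec Ag Const Var Atom)
    extends NQuasi Ag Const Var Atom S where
  Sne : Nonempty S
  Rne : R.Nonempty
  Ncs : ∀ (i : Ag) (t : TmE Const Var) (φ : Fm Ag Const Var Atom),
    Fm.jbox i t φ ∈ CS.csE → ∀ w ∈ toNQuasi.Im, toNQuasi.tset φ ∈ N i w t
  Napp : ∀ (i : Ag), ∀ w ∈ toNQuasi.Im, ∀ (t s : TmE Const Var) (φ ψ : Fm Ag Const Var Atom),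
    toNQuasi.tset (φ.imp ψ) ∈ N i w t → toNQuasi.tset φ ∈ N i w s →
      toNQuasi.tset ψ ∈ N i w (TmE.times t s)
  Nsum : ∀ (i : Ag), ∀ w ∈ toNQuasi.Im, ∀ (t s : TmE Const Var) (φ : Fm Ag Const Var Atom),
    toNQuasi.tset φ ∈ N i w s →
      toNQuasi.tset φ ∈ N i w (TmE.plus t s) ∧ toNQuasi.tset φ ∈ N i w (TmE.plus s t)
  Nrefl : ∀ (i : Ag), ∀ w ∈ toNQuasi.Im, ∀ (t : TmE Const Var) (φ : Fm Ag Const Var Atom),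
    toNQuasi.tset φ ∈ N i w t → w ∈ toNQuasi.tset φ
  Npos : ∀ (i : Ag), ∀ w ∈ toNQuasi.Im, ∀ (t : TmE Const Var) (φ : Fm Ag Const Var Atom),
    toNQuasi.tset φ ∈ N i w t → toNQuasi.tset (Fm.jbox i t φ) ∈ N i w (TmE.bang t)
  NOcs : ∀ (i : Ag) (t : TmO Const Var) (φ : Fm Ag Const Var Atom),
    Fm.obox i t φ ∈ CS.csO → ∀ w ∈ toNQuasi.Im, toNQuasi.tset φ ∈ NO i w t
  NOapp : ∀ (i : Ag), ∀ w ∈ toNQuasi.Im, ∀ (t s : TmO Const Var) (φ ψ : Fm Ag Const Var Atom),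
    toNQuasi.tset (φ.imp ψ) ∈ NO i w t → toNQuasi.tset φ ∈ NO i w s →
      toNQuasi.tset ψ ∈ NO i w (TmO.times t s)
  NOnoc : ∀ (i : Ag), ∀ w ∈ toNQuasi.Im, ∀ (t : TmO Const Var) (φ : Fm Ag Const Var Atom),
    toNQuasi.tset φ ∈ NO i w t → toNQuasi.tset (Fm.neg φ) ∉ NO i w t
  NOfact : ∀ (i : Ag), ∀ w ∈ toNQuasi.Im, ∀ (t : TmO Const Var) (φ : Fm Ag Const Var Atom),
    toNQuasi.tset ((Fm.obox i t φ).imp φ) ∈ NO i w (TmO.ddag t)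

/-- Truth at a point of an interpreted-neighborhood system. -/
abbrev NIS.SatP {S : Type} {CS : ConstSpec Ag Const Var Atom}
    (I : NIS Ag Const Var Atom S CS) :
    Fm Ag Const Var Atom → (ℕ → S) → ℕ → Prop :=
  I.toNQuasi.SatP

/-- I ⊨ φ for an interpreted-neighborhood system. -/
def NIS.Valid {S : Type} {CS : ConstSpec Ag Const Var Atom}
    (I : NIS Ag Const Var Atom S CS) (φ : Fm Ag Const Var Atom) : Prop :=
  ∀ r ∈ I.R, ∀ n : ℕ, I.SatP φ r n

/-- ⊨^N_CS φ : validity in all interpreted-neighborhood systems for JTO_CS. -/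
def NValid (CS : ConstSpec Ag Const Var Atom) (φ : Fm Ag Const Var Atom) : Prop :=
  ∀ (S : Type) (I : NIS Ag Const Var Atom S CS), I.Valid φ

/-- T ⊨^N_CS φ : local consequence over interpreted-neighborhood systems. -/
def NConseq (CS : ConstSpec Ag Const Var Atom) (T : Set (Fm Ag Const Var Atom))
    (φ : Fm Ag Const Var Atom) : Prop :=
  ∀ (S : Type) (I : NIS Ag Const Var Atom S CS), ∀ r ∈ I.R, ∀ n : ℕ,
    (∀ ψ ∈ T, I.SatP ψ r n) → I.SatP φ r n

end JTO

/-!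
An obligation `O[t]ᵢ φ` is a condition on the whole truth set `⟦φ⟧`, which also contains states
outside `Im(R)`, where truth is read off syntactically from `ν`. In the countermodel the only run is
`some : ℕ → Option ℕ` and the extra state `none` has `ν(none) = {p}`, so `⟦p⟧` and `⟦p ∧ p⟧` agree
along the run but differ at `none`. A justification variable supports exactly the sets containing
`none`, every other term (and every epistemic term) the sets containing the whole run. Hence every
justification assertion of the model forces its formula to hold all along the run, and this is what
makes all axioms, every constant specification and all neighbourhood conditions hold.
-/

namespace JTO

namespace NQuasi

variable {Ag Const Var Atom S : Type} {I : NQuasi Ag Const Var Atom S} {r : ℕ → S} {n : ℕ}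
  {φ ψ : Fm Ag Const Var Atom}

theorem satP_neg : I.SatP φ.neg r n ↔ ¬ I.SatP φ r n := Iff.rfl

theorem satP_top : I.SatP Fm.top r n := id

theorem satP_disj : I.SatP (φ.disj ψ) r n ↔ I.SatP φ r n ∨ I.SatP ψ r n :=
  or_iff_not_imp_left.symm

theorem satP_conj : I.SatP (φ.conj ψ) r n ↔ I.SatP φ r n ∧ I.SatP ψ r n := by
  rw [Fm.conj, satP_neg, satP_disj, satP_neg, satP_neg]
  tauto

theorem satP_biim : I.SatP (φ.biim ψ) r n ↔ (I.SatP φ r n ↔ I.SatP ψ r n) := by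
  rw [Fm.biim, satP_conj]
  exact iff_iff_implies_and_implies.symm

theorem satP_sprev : I.SatP φ.sprev r n ↔ n ≠ 0 ∧ I.SatP φ r (n - 1) := by
  show ¬ (n = 0 ∨ ¬ I.SatP φ r (n - 1)) ↔ _
  tauto

theorem satP_ev : I.SatP φ.ev r n ↔ ∃ m, n ≤ m ∧ I.SatP φ r m :=
  ⟨fun ⟨m, hnm, hφ, _⟩ => ⟨m, hnm, hφ⟩,
    fun ⟨m, hnm, hφ⟩ => ⟨m, hnm, hφ, fun _ _ _ => satP_top⟩⟩

theorem satP_alw : I.SatP φ.alw r n ↔ ∀ m, n ≤ m → I.SatP φ r m := by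
  rw [Fm.alw, satP_neg, satP_ev]
  simp only [satP_neg, not_exists, not_and, not_not]

theorem satP_once : I.SatP φ.once r n ↔ ∃ m, m ≤ n ∧ I.SatP φ r m :=
  ⟨fun ⟨m, hmn, hφ, _⟩ => ⟨m, hmn, hφ⟩,
    fun ⟨m, hmn, hφ⟩ => ⟨m, hmn, hφ, fun _ _ _ => satP_top⟩⟩

theorem satP_sofar : I.SatP φ.sofar r n ↔ ∀ m, m ≤ n → I.SatP φ r m := by
  rw [Fm.sofar, satP_neg, satP_once]
  simp only [satP_neg, not_exists, not_and, not_not]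

theorem satP_of_taut (h : Taut φ) : I.SatP φ r n := by
  classical
  have hv := h (fun ψ => decide (I.SatP ψ r n)) (decide_eq_false id) fun a b => by
    by_cases ha : I.SatP a r n <;> by_cases hb : I.SatP b r n <;>
      simp [NQuasi.SatP, ha, hb]
  simpa using hv

theorem satP_untl_expand : I.SatP (φ.untl ψ) r n ↔
    I.SatP ψ r n ∨ I.SatP φ r n ∧ I.SatP (φ.untl ψ) r (n + 1) := by
  constructor
  · rintro ⟨m, hnm, hψ, hφ⟩
    rcases hnm.eq_or_lt with rfl | hlt
    · exact Or.inl hψ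
    · exact Or.inr ⟨hφ n le_rfl hlt, m, hlt, hψ, fun k hk => hφ k (by omega)⟩
  · rintro (hψ | ⟨hφ, m, hnm, hψ, hφ'⟩)
    · exact ⟨n, le_rfl, hψ, fun k hnk hkn => absurd hkn (by omega)⟩
    · refine ⟨m, by omega, hψ, fun k hnk hkm => ?_⟩
      rcases hnk.eq_or_lt with rfl | hlt
      · exact hφ
      · exact hφ' k hlt hkm

theorem satP_snce_expand : I.SatP (φ.snce ψ) r n ↔
    I.SatP ψ r n ∨ I.SatP φ r n ∧ n ≠ 0 ∧ I.SatP (φ.snce ψ) r (n - 1) := by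
  constructor
  · rintro ⟨m, hmn, hψ, hφ⟩
    rcases hmn.eq_or_lt with rfl | hlt
    · exact Or.inl hψ
    · exact Or.inr ⟨hφ n hlt le_rfl, by omega, m, by omega, hψ,
        fun k hmk hk => hφ k hmk (by omega)⟩
  · rintro (hψ | ⟨hφ, hn, m, hmn, hψ, hφ'⟩)
    · exact ⟨n, le_rfl, hψ, fun k hnk hkn => absurd hkn (by omega)⟩
    · refine ⟨m, by omega, hψ, fun k hmk hkn => ?_⟩
      rcases hkn.eq_or_lt with rfl | hlt
      · exact hφ
      · exact hφ' k hmk (by omega)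

theorem satP_alw_of_induction (hstep : I.SatP (φ.imp φ.next).alw r n) (h : I.SatP φ r n) :
    I.SatP φ.alw r n := by
  rw [satP_alw] at hstep ⊢
  intro m hnm
  induction m, hnm using Nat.le_induction with
  | base => exact h
  | succ m hnm ih => exact hstep m hnm ih

theorem satP_sofar_of_induction (hstep : I.SatP (φ.imp φ.wprev).sofar r n)
    (h : I.SatP φ r n) : I.SatP φ.sofar r n := by
  rw [satP_sofar] at hstep ⊢
  intro m hmn
  induction hmn using Nat.decreasingInduction with
  | self => exact h
  | of_succ k hkn ih => exact (hstep (k + 1) hkn ih).resolve_left k.succ_ne_zero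

end NQuasi

def counterNO {Const Var : Type} : TmO Const Var → Set (Set (Option ℕ))
  | .var _ => {A | none ∈ A}
  | _ => {A | ∀ m, some m ∈ A}

def counterQuasi (Ag Const Var : Type) {Atom : Type} (p : Atom) :
    NQuasi Ag Const Var Atom (Option ℕ) where
  R := {some}
  N _ _ _ := {A | ∀ m, some m ∈ A}
  NO _ _ := counterNO
  val _ := {p}
  valF _ := {Fm.atom p}

section counterQuasi

variable {Ag Const Var Atom : Type} {p : Atom} {φ ψ : Fm Ag Const Var Atom} {i : Ag}
  {r : ℕ → Option ℕ} {n : ℕ}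

local notation "M" => counterQuasi Ag Const Var p

open NQuasi

theorem none_notMem_im_counterQuasi : none ∉ (M).Im := by
  rintro ⟨_, rfl, m, hm⟩
  exact Option.some_ne_none m hm

theorem satS_some_counterQuasi : (M).SatS φ (some n) ↔ (M).SatP φ some n := by
  constructor
  · rintro (⟨_, rfl, m, hm, hφ⟩ | ⟨him, -⟩)
    · rwa [← Option.some_injective _ hm]
    · exact absurd ⟨some, rfl, n, rfl⟩ him
  · exact fun hφ => Or.inl ⟨some, rfl, n, rfl, hφ⟩

theorem satS_none_counterQuasi : (M).SatS φ none ↔ φ = Fm.atom p := by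
  constructor
  · rintro (⟨_, rfl, m, hm, -⟩ | ⟨-, hφ⟩)
    · exact absurd hm (Option.some_ne_none m)
    · exact hφ
  · rintro rfl
    exact Or.inr ⟨none_notMem_im_counterQuasi, rfl⟩

theorem satP_jbox_counterQuasi {t : TmE Const Var} :
    (M).SatP (.jbox i t φ) r n ↔ ∀ m, (M).SatP φ some m :=
  forall_congr' fun _ => satS_some_counterQuasi

theorem satP_obox_var_counterQuasi {x : Var} :
    (M).SatP (.obox i (.var x) φ) r n ↔ φ = Fm.atom p :=
  satS_none_counterQuasi

theorem forall_satP_of_mem_counterNO {t : TmO Const Var} (h : (M).tset φ ∈ counterNO t) :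
    ∀ m, (M).SatP φ some m := by
  cases t with
  | var x =>
    obtain rfl : φ = Fm.atom p := satS_none_counterQuasi.mp h
    exact fun _ => rfl
  | const | ddag | times => exact fun m => satS_some_counterQuasi.mp (h m)

theorem counterNO_app {t s : TmO Const Var} (hφψ : (M).tset (φ.imp ψ) ∈ counterNO t)
    (hφ : (M).tset φ ∈ counterNO s) : (M).tset ψ ∈ counterNO (t.times s) := fun m =>
  satS_some_counterQuasi.mpr
    (forall_satP_of_mem_counterNO hφψ m (forall_satP_of_mem_counterNO hφ m))

theorem counterNO_noc {t : TmO Const Var} (hφ : (M).tset φ ∈ counterNO t) :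
    (M).tset φ.neg ∉ counterNO t := fun hnφ =>
  forall_satP_of_mem_counterNO hnφ 0 (forall_satP_of_mem_counterNO hφ 0)

theorem counterNO_fact {t : TmO Const Var} :
    (M).tset ((Fm.obox i t φ).imp φ) ∈ counterNO t.ddag := fun m =>
  satS_some_counterQuasi.mpr fun hob => forall_satP_of_mem_counterNO hob m

theorem IsAxiom.satP_counterQuasi (h : IsAxiom φ) (n : ℕ) : (M).SatP φ some n := by
  cases h with
  | taut h => exact satP_of_taut h
  | nextK => exact fun h₁ h₂ => h₁ h₂
  | alwK =>
    exact fun h₁ h₂ => satP_alw.mpr fun m hm => satP_alw.mp h₁ m hm (satP_alw.mp h₂ m hm)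
  | fn => exact satP_biim.mpr Iff.rfl
  | ind => exact satP_alw_of_induction
  | untl1 => exact fun ⟨m, hnm, hψ, _⟩ => satP_ev.mpr ⟨m, hnm, hψ⟩
  | untl2 =>
    rw [satP_biim, satP_disj, satP_conj]
    exact satP_untl_expand
  | sofarK =>
    exact fun h₁ h₂ => satP_sofar.mpr fun m hm =>
      satP_sofar.mp h₁ m hm (satP_sofar.mp h₂ m hm)
  | wprevK => exact fun h₁ h₂ => h₁.elim Or.inl fun h => h₂.imp id h
  | sw => exact fun h => Or.inr (satP_sprev.mp h).2
  | initial => exact satP_once.mpr ⟨0, n.zero_le, Or.inl rfl⟩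
  | sofarInd => exact satP_sofar_of_induction
  | snce1 => exact fun ⟨m, hmn, hψ, _⟩ => satP_once.mpr ⟨m, hmn, hψ⟩
  | snce2 =>
    rw [satP_biim, satP_disj, satP_conj, satP_sprev]
    exact satP_snce_expand
  | fp => exact fun h => satP_sprev.mpr ⟨n.succ_ne_zero, h⟩
  | pf => exact fun h => n.eq_zero_or_pos.imp id fun hn => by rwa [SatP, Nat.sub_add_cancel hn]
  | app => exact fun h₁ h₂ => satP_jbox_counterQuasi.mpr fun m =>
      satP_jbox_counterQuasi.mp h₁ m (satP_jbox_counterQuasi.mp h₂ m)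
  | sum1 | sum2 => exact id
  | fact => exact fun h => satP_jbox_counterQuasi.mp h n
  | pos => exact fun h => satP_jbox_counterQuasi.mpr fun _ => h
  | appO => exact counterNO_app
  | noc => exact counterNO_noc
  | ofact => exact counterNO_fact

theorem EIter.satP_counterQuasi (h : EIter φ) (n : ℕ) : (M).SatP φ some n := by
  induction h generalizing n with
  | base h => exact satP_jbox_counterQuasi.mpr h.satP_counterQuasi
  | step _ ih => exact satP_jbox_counterQuasi.mpr ih

theorem OIter.satP_counterQuasi (h : OIter φ) (n : ℕ) : (M).SatP φ some n := by
  induction h generalizing n with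
  | base h => exact fun m => satS_some_counterQuasi.mpr (h.satP_counterQuasi m)
  | step _ ih => exact fun m => satS_some_counterQuasi.mpr (ih m)

end counterQuasi

def counterNIS {Ag Const Var Atom : Type} (CS : ConstSpec Ag Const Var Atom) (p : Atom) :
    NIS Ag Const Var Atom (Option ℕ) CS where
  toNQuasi := counterQuasi Ag Const Var p
  Sne := ⟨none⟩
  Rne := ⟨some, rfl⟩
  Ncs _ _ _ hφ _ _ := hφ.2.satP_counterQuasi 0
  Napp _ _ _ _ _ _ _ hφψ hφ m := satS_some_counterQuasi.mpr
    (satS_some_counterQuasi.mp (hφψ m) (satS_some_counterQuasi.mp (hφ m)))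
  Nsum _ _ _ _ _ _ h := ⟨h, h⟩
  Nrefl := by
    rintro _ _ ⟨_, rfl, m, rfl⟩ _ _ h
    exact h m
  Npos _ _ _ _ _ h m := satS_some_counterQuasi.mpr
    (satP_jbox_counterQuasi.mpr fun k => satS_some_counterQuasi.mp (h k))
  NOcs _ _ _ hφ _ _ := hφ.2.satP_counterQuasi 0
  NOapp _ _ _ _ _ _ _ := counterNO_app
  NOnoc _ _ _ _ _ := counterNO_noc
  NOfact _ _ _ _ _ := counterNO_fact

theorem nValid_biim_conj_self {Ag Const Var Atom : Type} (CS : ConstSpec Ag Const Var Atom)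
    (φ : Fm Ag Const Var Atom) : NValid CS (φ.biim (φ.conj φ)) := fun _ _ _ _ _ =>
  NQuasi.satP_biim.mpr (NQuasi.satP_conj.trans and_self_iff).symm

theorem jreO_not_validity_preserving_general (Ag Const Var Atom : Type)
    (CS : ConstSpec Ag Const Var Atom) (i : Ag) (x : Var) (p : Atom) :
    (∃ (φ ψ : Fm Ag Const Var Atom) (t : TmO Const Var) (j : Ag),
      NValid CS (Fm.biim φ ψ) ∧
      ¬ NValid CS (Fm.biim (Fm.obox j t φ) (Fm.obox j t ψ))) ∧
    (NValid CS (Fm.biim (Fm.atom p) (Fm.conj (Fm.atom p) (Fm.atom p))) ∧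
      ¬ NValid CS (Fm.biim (Fm.obox i (TmO.var x) (Fm.atom p))
        (Fm.obox i (TmO.var x) (Fm.conj (Fm.atom p) (Fm.atom p))))) := by
  have hvalid := nValid_biim_conj_self CS (Fm.atom p)
  have hinvalid : ¬ NValid CS (Fm.biim (Fm.obox i (TmO.var x) (Fm.atom p))
      (Fm.obox i (TmO.var x) (Fm.conj (Fm.atom p) (Fm.atom p)))) := fun h => by
    have hsame := NQuasi.satP_biim.mp (h _ (counterNIS CS p) some rfl 0)
    dsimp only [NIS.SatP, counterNIS] at hsame
    rw [satP_obox_var_counterQuasi, satP_obox_var_counterQuasi] at hsame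
    nomatch hsame.mp rfl
  exact ⟨⟨_, _, _, i, hvalid, hinvalid⟩, hvalid, hinvalid⟩

/-- the deontic regularity rule (JRE_O) is not validity preserving
in JTO_CS over interpreted-neighborhood systems. -/
theorem jreO_not_validity_preserving (Ag Const Var Atom : Type)
    [Fintype Ag] [Nonempty Ag] [Countable Const] [Countable Var] [Countable Atom]
    (CS : ConstSpec Ag Const Var Atom) (i : Ag) (x : Var) (p : Atom) :
    (∃ (φ ψ : Fm Ag Const Var Atom) (t : TmO Const Var) (j : Ag),
      NValid CS (Fm.biim φ ψ) ∧
      ¬ NValid CS (Fm.biim (Fm.obox j t φ) (Fm.obox j t ψ))) ∧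
    (NValid CS (Fm.biim (Fm.atom p) (Fm.conj (Fm.atom p) (Fm.atom p))) ∧
      ¬ NValid CS (Fm.biim (Fm.obox i (TmO.var x) (Fm.atom p))
        (Fm.obox i (TmO.var x) (Fm.conj (Fm.atom p) (Fm.atom p))))) :=
  jreO_not_validity_preserving_general Ag Const Var Atom CS i x p

end JTO
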